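/- Let S(A) = {a_n} be an independent Stanley sequence, let k ≥ κ(A), set c = a_{2^k} and A_k = {a_0, a_1, ..., a_{2^k − 1}}, and suppose a_{2^k − 1} ≥ λ(A) + ω(A). Then for every integer x, the set (A_k + x) ∪ (A_k + c + x) ∪ (A_k + 3c + x) ∪ (A_k + 4c + x) covers every integer in the set ([x, 9c + x) \ ((A_k ∪ (A_k + c) ∪ (A_k + 3c) ∪ (A_k + 4c) ∪ O(A)) + x)) ∪ (O(A) + 9c + x). -/

import Mathlib

/-- A set of integers is 3-free if it contains no 3-term arithmetic progression. -/
def ThreeFreeSet (S : Set ℤ) : Prop :=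
  ∀ x ∈ S, ∀ y ∈ S, ∀ z ∈ S, x < y → y < z → x + z ≠ 2 * y

/-- `a` is the Stanley sequence generated greedily from the finite 3-free set `A`
of nonnegative integers containing 0: `a` first enumerates `A` in increasing order,
and for `n ≥ |A|`, `a n` is the least integer exceeding `a (n-1)` keeping the
set of terms so far 3-free. -/
def IsStanleySeq (A : Finset ℤ) (a : ℕ → ℤ) : Prop :=
  (0 : ℤ) ∈ A ∧ (∀ x ∈ A, 0 ≤ x) ∧ ThreeFreeSet ↑A ∧
  StrictMono a ∧ (∀ i < A.card, a i ∈ A) ∧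
  ∀ n, A.card ≤ n →
    IsLeast {m : ℤ | a (n - 1) < m ∧ ThreeFreeSet (a '' Set.Iio n ∪ {m})} (a n)

/-- The two defining conditions of an independent Stanley sequence,
for a given λ and κ. -/
def IndepParams (a : ℕ → ℤ) (lam : ℤ) (κ : ℕ) : Prop :=
  ∀ k, κ ≤ k →
    (∀ i < 2 ^ k, a (2 ^ k + i) = a (2 ^ k) + a i) ∧
    a (2 ^ k) = 2 * a (2 ^ k - 1) + 1 - lam

/-- A Stanley sequence is independent if `IndepParams` holds for some λ and κ. -/
def Independent (a : ℕ → ℤ) : Prop := ∃ lam κ, IndepParams a lam κ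

/-- κ(A): the minimal κ witnessing independence. -/
noncomputable def kappa (a : ℕ → ℤ) : ℕ := sInf {κ | ∃ lam, IndepParams a lam κ}

/-- λ(A), recovered from the defining equation at k = κ(A). -/
noncomputable def lambdaA (a : ℕ → ℤ) : ℤ :=
  2 * a (2 ^ kappa a - 1) + 1 - a (2 ^ kappa a)

/-- The repeat factor ρ(A) = a_{2^{κ(A)}}. -/
noncomputable def rho (a : ℕ → ℤ) : ℤ := a (2 ^ kappa a)

/-- The scaling factor α(A), satisfying a_{2^k} = α·3^k for all k ≥ κ(A). -/
noncomputable def scalingFactor (a : ℕ → ℤ) : ℚ :=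
  (a (2 ^ kappa a) : ℚ) / 3 ^ kappa a

/-- An integer `x` is covered by a set `S` if there are `y < z < x` in `S`
with `y, z, x` in arithmetic progression. -/
def Covers (S : Set ℤ) (x : ℤ) : Prop :=
  ∃ y z, y ∈ S ∧ z ∈ S ∧ y < z ∧ z < x ∧ 2 * z = y + x

/-- An integer `x` is jointly covered by `S` and `T` if there are `y < z < x`
with `y ∈ S`, `z ∈ T`, and `y, z, x` in arithmetic progression. -/
def JointlyCovers (S T : Set ℤ) (x : ℤ) : Prop :=
  ∃ y z, y ∈ S ∧ z ∈ T ∧ y < z ∧ z < x ∧ 2 * z = y + x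

/-- O(A): nonnegative integers neither in the Stanley sequence nor covered by it. -/
def OSet (a : ℕ → ℤ) : Set ℤ :=
  {x | 0 ≤ x ∧ x ∉ Set.range a ∧ ¬ Covers (Set.range a) x}

/-- ω(A): the maximum element of O(A). -/
noncomputable def omegaA (a : ℕ → ℤ) : ℤ := sSup (OSet a)

/-- The translate `S + t` of a set of integers. -/
def shift (S : Set ℤ) (t : ℤ) : Set ℤ := (· + t) '' S

/-- A triadic number: a rational whose denominator in lowest terms is a power of 3. -/
def IsTriadic (q : ℚ) : Prop := ∃ j : ℕ, q.den = 3 ^ j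

/-!
Write `U = A_k ∪ (A_k + c) ∪ (A_k + 3c) ∪ (A_k + 4c)`. Independence applied twice shows that
`U` is exactly the set of the first `2^(k+2)` terms and that `a_{2^(k+2)} = 9c`; translating by `x`,
it suffices to show that `U` covers `[0, 9c) \ (U ∪ O(A))` and `O(A) + 9c`.

An integer of `[0, 9c)` outside `U ∪ O(A)` is not a term, hence is covered by the sequence, and both
witnesses lie below `9c`, i.e. in `U`. For `o ∈ O(A)` the bound on `a_{2^k - 1}` gives `o < c`
and `o + 9c > ω(A)`; since the terms in `[9c, 27c)` are `9c + U`, `o + 9c` is not a term, so it is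
covered by terms `a_p < a_q`. If `a_q ≥ 9c` then either `a_p ≥ 9c`, and `o` itself would be covered
by the sequence, or `a_p < 9c`, and then `2 a_q - a_p` is too large.
-/

lemma ThreeFreeSet.mono {S T : Set ℤ} (hT : ThreeFreeSet T) (h : S ⊆ T) : ThreeFreeSet S :=
  fun x hx y hy z hz => hT x (h hx) y (h hy) z (h hz)

lemma Covers.mono {S T : Set ℤ} {x : ℤ} (h : Covers S x) (hST : S ⊆ T) : Covers T x := by
  obtain ⟨y, z, hy, hz, hyz, hzx, hAP⟩ := h
  exact ⟨y, z, hST hy, hST hz, hyz, hzx, hAP⟩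

lemma covers_of_not_threeFreeSet_union_singleton {S : Set ℤ} {x : ℤ} (hS : ThreeFreeSet S)
    (hlt : ∀ s ∈ S, s < x) (h : ¬ ThreeFreeSet (S ∪ {x})) : Covers S x := by
  simp only [ThreeFreeSet, not_forall, not_not] at h
  obtain ⟨u, hu, v, hv, w, hw, huv, hvw, hAP⟩ := h
  have hle : ∀ s ∈ S ∪ {x}, s ≤ x := by
    rintro s (hs | rfl)
    exacts [(hlt s hs).le, le_rfl]
  have hmem : ∀ s ∈ S ∪ {x}, s < x → s ∈ S := by
    rintro s (hs | rfl) hsx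
    exacts [hs, absurd hsx (lt_irrefl s)]
  have hu' := hmem u hu (by linarith [hle w hw])
  have hv' := hmem v hv (by linarith [hle w hw])
  obtain hw' | rfl := hw
  · exact absurd hAP (hS u hu' v hv' w hw' huv hvw)
  · exact ⟨u, v, hu', hv', huv, hvw, by omega⟩

lemma mem_shift {S : Set ℤ} {t z : ℤ} : z ∈ shift S t ↔ z - t ∈ S :=
  ⟨by rintro ⟨s, hs, rfl⟩; simpa using hs, fun h => ⟨z - t, h, sub_add_cancel z t⟩⟩

lemma shift_union (S T : Set ℤ) (t : ℤ) : shift (S ∪ T) t = shift S t ∪ shift T t :=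
  Set.image_union _ _ _

lemma shift_shift (S : Set ℤ) (u t : ℤ) : shift (shift S u) t = shift S (u + t) := by
  simp only [shift, Set.image_image, add_assoc]

lemma Covers.shift {S : Set ℤ} {w : ℤ} (h : Covers S w) (t : ℤ) : Covers (shift S t) (w + t) := by
  obtain ⟨y, z, hy, hz, hyz, hzw, hAP⟩ := h
  exact ⟨y + t, z + t, ⟨y, hy, rfl⟩, ⟨z, hz, rfl⟩, by omega, by omega, by omega⟩

lemma covers_range_of_notMem_OSet {a : ℕ → ℤ} {w : ℤ} (hw : 0 ≤ w) (hwr : w ∉ Set.range a)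
    (hwO : w ∉ OSet a) : Covers (Set.range a) w := by
  by_contra h
  exact hwO ⟨hw, hwr, h⟩

namespace IndepParams

variable {a : ℕ → ℤ} {lam : ℤ} {κ k : ℕ}

lemma apply_two_pow_add (hP : IndepParams a lam κ) (hk : κ ≤ k) {i : ℕ} (hi : i < 2 ^ k) :
    a (2 ^ k + i) = a (2 ^ k) + a i :=
  (hP k hk).1 i hi

lemma apply_two_pow (hP : IndepParams a lam κ) (hk : κ ≤ k) :
    a (2 ^ k) = 2 * a (2 ^ k - 1) + 1 - lam :=
  (hP k hk).2

lemma apply_of_two_pow_le (hP : IndepParams a lam κ) (hk : κ ≤ k) {n : ℕ} (h₁ : 2 ^ k ≤ n)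
    (h₂ : n < 2 ^ (k + 1)) : a n = a (2 ^ k) + a (n - 2 ^ k) := by
  have := hP.apply_two_pow_add hk (i := n - 2 ^ k) (by rw [pow_succ] at h₂; omega)
  rwa [Nat.add_sub_cancel' h₁] at this

lemma apply_two_pow_succ (hP : IndepParams a lam κ) (hk : κ ≤ k) :
    a (2 ^ (k + 1)) = 3 * a (2 ^ k) := by
  have hlast : a (2 ^ (k + 1) - 1) = a (2 ^ k) + a (2 ^ k - 1) := by
    have := hP.apply_two_pow_add hk (i := 2 ^ k - 1) (by have := Nat.one_le_two_pow (n := k); omega)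
    rwa [show 2 ^ k + (2 ^ k - 1) = 2 ^ (k + 1) - 1 by rw [pow_succ]; omega] at this
  rw [hP.apply_two_pow (by omega), hlast, hP.apply_two_pow hk]
  ring

lemma image_Iio_two_pow_succ (hP : IndepParams a lam κ) (hk : κ ≤ k) :
    a '' Set.Iio (2 ^ (k + 1)) =
      a '' Set.Iio (2 ^ k) ∪ shift (a '' Set.Iio (2 ^ k)) (a (2 ^ k)) := by
  have hpow : 2 ^ (k + 1) = 2 ^ k + 2 ^ k := by rw [pow_succ]; omega
  ext z
  constructor
  · rintro ⟨n, hn, rfl⟩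
    rw [Set.mem_Iio] at hn
    rcases lt_or_ge n (2 ^ k) with h | h
    · exact Or.inl ⟨n, h, rfl⟩
    · refine Or.inr ⟨a (n - 2 ^ k), ⟨n - 2 ^ k, by rw [Set.mem_Iio]; omega, rfl⟩, ?_⟩
      rw [hP.apply_of_two_pow_le hk h hn, add_comm]
  · rintro (⟨n, hn, rfl⟩ | ⟨_, ⟨n, hn, rfl⟩, rfl⟩) <;> rw [Set.mem_Iio] at hn
    · exact ⟨n, by rw [Set.mem_Iio]; omega, rfl⟩
    · exact ⟨2 ^ k + n, by rw [Set.mem_Iio]; omega, by rw [hP.apply_two_pow_add hk hn, add_comm]⟩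

end IndepParams

lemma indepParams_lambdaA {a : ℕ → ℤ} (hInd : Independent a) :
    IndepParams a (lambdaA a) (kappa a) := by
  obtain ⟨lam, κ, hP⟩ := hInd
  obtain ⟨lam', hP'⟩ : ∃ lam, IndepParams a lam (kappa a) := 
    Nat.sInf_mem (s := {κ | ∃ lam, IndepParams a lam κ}) ⟨κ, lam, hP⟩
  have hlam : lam' = lambdaA a := by
    have := hP'.apply_two_pow le_rfl
    unfold lambdaA
    omega
  exact hlam ▸ hP'

namespace IsStanleySeq

variable {A : Finset ℤ} {a : ℕ → ℤ}

lemma strictMono (hA : IsStanleySeq A a) : StrictMono a := hA.2.2.2.1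

lemma card_pos (hA : IsStanleySeq A a) : 0 < A.card := Finset.card_pos.mpr ⟨0, hA.1⟩

lemma nonneg (hA : IsStanleySeq A a) (n : ℕ) : 0 ≤ a n :=
  (hA.2.1 _ (hA.2.2.2.2.1 0 hA.card_pos)).trans (hA.strictMono.monotone (Nat.zero_le n))

lemma threeFreeSet_image_Iio (hA : IsStanleySeq A a) (n : ℕ) :
    ThreeFreeSet (a '' Set.Iio n) := by
  rcases le_or_gt n A.card with hn | hn
  · refine hA.2.2.1.mono ?_
    rintro _ ⟨i, hi, rfl⟩
    exact hA.2.2.2.2.1 i (lt_of_lt_of_le hi hn)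
  · obtain ⟨m, rfl⟩ : ∃ m, n = m + 1 := ⟨n - 1, by omega⟩
    have := (hA.2.2.2.2.2 m (by omega)).1.2
    rwa [Set.Iio_add_one_eq_Iic, ← Set.Iio_insert, Set.image_insert_eq, ← Set.union_singleton]

lemma covers_of_notMem_range (hA : IsStanleySeq A a) {x : ℤ} (hx : a (A.card - 1) < x)
    (hxr : x ∉ Set.range a) : Covers (Set.range a) x := by
  have hex : ∃ n, x < a n := by
    obtain ⟨_, ⟨n, rfl⟩, hn⟩ :=
      not_bddAbove_iff.mp hA.strictMono.not_bddAbove_range_of_isSuccArchimedean x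
    exact ⟨n, hn⟩
  set n := Nat.find hex
  have hxn : x < a n := Nat.find_spec hex
  have hn : A.card ≤ n := by
    by_contra h
    have := hA.strictMono.monotone (show n ≤ A.card - 1 by omega)
    omega
  have hprev : a (n - 1) < x := by
    have := Nat.find_min hex (show n - 1 < n by have := hA.card_pos; omega)
    exact lt_of_le_of_ne (not_lt.mp this) (fun h => hxr ⟨n - 1, h⟩)
  have hlt : ∀ s ∈ a '' Set.Iio n, s < x := by
    rintro _ ⟨i, hi, rfl⟩
    exact (hA.strictMono.monotone (show i ≤ n - 1 by rw [Set.mem_Iio] at hi; omega)).trans_lt hprev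
  refine (covers_of_not_threeFreeSet_union_singleton (hA.threeFreeSet_image_Iio n) hlt
    fun hfree => ?_).mono (Set.image_subset_range a _)
  exact (hA.2.2.2.2.2 n hn).2 ⟨hprev, hfree⟩ |>.not_gt hxn

lemma bddAbove_OSet (hA : IsStanleySeq A a) : BddAbove (OSet a) :=
  ⟨a (A.card - 1), fun _ ho => not_lt.mp fun h => ho.2.2 (hA.covers_of_notMem_range h ho.2.1)⟩

lemma le_omegaA (hA : IsStanleySeq A a) {o : ℤ} (ho : o ∈ OSet a) : o ≤ omegaA a :=
  le_csSup hA.bddAbove_OSet ho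

lemma covers_image_Iio_of_lt (hA : IsStanleySeq A a) {N : ℕ} {w : ℤ} (hw : 0 ≤ w)
    (hwN : w < a N) (hwS : w ∉ a '' Set.Iio N) (hwO : w ∉ OSet a) : Covers (a '' Set.Iio N) w := by
  have hwr : w ∉ Set.range a := by
    rintro ⟨n, rfl⟩
    exact hwS ⟨n, hA.strictMono.lt_iff_lt.mp hwN, rfl⟩
  obtain ⟨_, _, ⟨p, rfl⟩, ⟨q, rfl⟩, hpq, hqw, hAP⟩ := covers_range_of_notMem_OSet hw hwr hwO
  have hq : q < N := hA.strictMono.lt_iff_lt.mp (hqw.trans hwN)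
  exact ⟨a p, a q, ⟨p, (hA.strictMono.lt_iff_lt.mp hpq).trans hq, rfl⟩, ⟨q, hq, rfl⟩,
    hpq, hqw, hAP⟩

lemma covers_add_of_mem_OSet (hA : IsStanleySeq A a) {lam : ℤ} {κ K : ℕ}
    (hP : IndepParams a lam κ) (hK : κ ≤ K) (hω : lam + omegaA a ≤ a (2 ^ K - 1)) {o : ℤ}
    (ho : o ∈ OSet a) : Covers (a '' Set.Iio (2 ^ K)) (o + a (2 ^ K)) := by
  set C := a (2 ^ K)
  have hC : C = 2 * a (2 ^ K - 1) + 1 - lam := hP.apply_two_pow hK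
  have hoω := hA.le_omegaA ho
  have hb := hA.nonneg (2 ^ K - 1)
  have ho0 : 0 ≤ o := ho.1
  have hblock {n : ℕ} (h₁ : C ≤ a n) (h₂ : a n < 3 * C) : a n = C + a (n - 2 ^ K) := by
    rw [← hP.apply_two_pow_succ hK] at h₂
    exact hP.apply_of_two_pow_le hK (hA.strictMono.le_iff_le.mp h₁) (hA.strictMono.lt_iff_lt.mp h₂)
  have hr : o + C ∉ Set.range a := by
    rintro ⟨n, hn⟩
    have := hblock (n := n) (by omega) (by omega)
    exact ho.2.1 ⟨n - 2 ^ K, by omega⟩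
  have hO : o + C ∉ OSet a := fun h => by linarith [hA.le_omegaA h]
  obtain ⟨_, _, ⟨p, rfl⟩, ⟨q, rfl⟩, hpq, hqo, hAP⟩ := covers_range_of_notMem_OSet (by omega) hr hO
  suffices hq : q < 2 ^ K from
    ⟨a p, a q, ⟨p, (hA.strictMono.lt_iff_lt.mp hpq).trans hq, rfl⟩, ⟨q, hq, rfl⟩, hpq, hqo, hAP⟩
  by_contra hq
  have hq' := hblock (hA.strictMono.monotone (not_lt.mp hq)) (by omega)
  rcases lt_or_ge p (2 ^ K) with hpK | hpK
  · -- `2 a_q - a_p ≥ 2C - a_{2^K - 1}` already exceeds `o + C`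
    have := hA.strictMono.monotone (show p ≤ 2 ^ K - 1 by omega)
    have := hA.nonneg (q - 2 ^ K)
    omega
  · have hp' := hblock (hA.strictMono.monotone hpK) (by omega)
    exact ho.2.2 ⟨a (p - 2 ^ K), a (q - 2 ^ K), ⟨_, rfl⟩, ⟨_, rfl⟩, by omega, by omega, by omega⟩

end IsStanleySeq

/-- Lemma 3.2(e): `(A_k + x) ∪ (A_k + c + x) ∪ (A_k + 3c + x) ∪ (A_k + 4c + x)`
covers `([x, 9c+x) \ ((A_k ∪ (A_k+c) ∪ (A_k+3c) ∪ (A_k+4c) ∪ O(A)) + x)) ∪ (O(A) + 9c + x)`. -/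
theorem cover_part_e (A : Finset ℤ) (a : ℕ → ℤ)
    (hA : IsStanleySeq A a) (hInd : Independent a) (k : ℕ) (hk : kappa a ≤ k)
    (c : ℤ) (hc : c = a (2 ^ k))
    (Ak : Set ℤ) (hAk : Ak = a '' Set.Iio (2 ^ k))
    (hbound : lambdaA a + omegaA a ≤ a (2 ^ k - 1)) :
    ∀ x : ℤ,
      ∀ z ∈ (Set.Ico x (9 * c + x) \
            shift (Ak ∪ shift Ak c ∪ shift Ak (3 * c) ∪ shift Ak (4 * c) ∪ OSet a) x) ∪
          shift (OSet a) (9 * c + x),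
        Covers (shift Ak x ∪ shift Ak (c + x) ∪ shift Ak (3 * c + x) ∪ shift Ak (4 * c + x)) z := by
  have hP := indepParams_lambdaA hInd
  have hU : Ak ∪ shift Ak c ∪ shift Ak (3 * c) ∪ shift Ak (4 * c) = a '' Set.Iio (2 ^ (k + 2)) := by
    rw [hP.image_Iio_two_pow_succ (k := k + 1) (by omega), hP.image_Iio_two_pow_succ hk,
      hP.apply_two_pow_succ hk, ← hAk, ← hc, shift_union, shift_shift, ← Set.union_assoc,
      show c + 3 * c = 4 * c by ring]
  have h9c : a (2 ^ (k + 2)) = 9 * c := by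
    rw [hP.apply_two_pow_succ (k := k + 1) (by omega), hP.apply_two_pow_succ hk, hc]
    ring
  have hω : lambdaA a + omegaA a ≤ a (2 ^ (k + 2) - 1) :=
    hbound.trans <| hA.strictMono.monotone <|
      Nat.sub_le_sub_right (Nat.pow_le_pow_right two_pos (by omega)) 1
  intro x z hz
  rw [← shift_shift, ← shift_shift, ← shift_shift, ← shift_union, ← shift_union, ← shift_union, hU,
    ← sub_add_cancel z x]
  refine Covers.shift ?_ x
  rcases hz with ⟨⟨hxz, hz9⟩, hzU⟩ | ⟨o, ho, rfl⟩
  · rw [mem_shift, Set.mem_union, not_or, hU] at hzU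
    exact hA.covers_image_Iio_of_lt (by omega) (by omega) hzU.1 hzU.2
  · convert hA.covers_add_of_mem_OSet hP (by omega) hω ho using 1
    rw [h9c]
    ring
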